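/- Let f : X → Y and g : X' → Y' be chain maps in C_I(P) between minimal projective complexes such that f and g are isomorphic in the homotopy category K_I(P), i.e., there exist isomorphisms φ : X → X' and ψ : Y → Y' in K_I(P) with ψ∘[f] = [g]∘φ. If f is sepic, then g is sepic. -/

import Mathlib

open CategoryTheory CategoryTheory.Limits

namespace ARShapes

variable {Λ : Type} [Ring Λ]

/-- Cochain complexes of (right) `Λ`-modules, i.e. `Λᵐᵒᵖ`-modules, indexed by `ℤ`. -/
abbrev Cplx (Λ : Type) [Ring Λ] : Type 1 := CochainComplex (ModuleCat Λᵐᵒᵖ) ℤ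

/-- A minimal projective complex: a complex of finitely generated projective right
`Λ`-modules whose differentials have image contained in the radical of the target. -/
def IsMinimalProjective (X : Cplx Λ) : Prop :=
  (∀ i : ℤ, Module.Finite Λᵐᵒᵖ (X.X i)) ∧ (∀ i : ℤ, Module.Projective Λᵐᵒᵖ (X.X i)) ∧
    (∀ i : ℤ, LinearMap.range (X.d i (i + 1)).hom ≤
      (Ideal.jacobson (⊥ : Ideal Λᵐᵒᵖ)) • (⊤ : Submodule Λᵐᵒᵖ (X.X (i + 1))))

/-- Irreducibility of a morphism in the category `P` of finitely generated projective
right `Λ`-modules (a full subcategory of all modules). -/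
def IrreducibleP {M N : ModuleCat Λᵐᵒᵖ} (φ : M ⟶ N) : Prop :=
  ¬ IsSplitMono φ ∧ ¬ IsSplitEpi φ ∧
    ∀ (Z : ModuleCat Λᵐᵒᵖ), Module.Finite Λᵐᵒᵖ Z → Module.Projective Λᵐᵒᵖ Z →
      ∀ (g : M ⟶ Z) (h : Z ⟶ N), φ = g ≫ h → IsSplitMono g ∨ IsSplitEpi h

/-- A chain map is smonic if all of its components are split monomorphisms. -/
def Smonic {X Y : Cplx Λ} (f : X ⟶ Y) : Prop := ∀ i : ℤ, IsSplitMono (f.f i)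

/-- A chain map is sepic if all of its components are split epimorphisms. -/
def Sepic {X Y : Cplx Λ} (f : X ⟶ Y) : Prop := ∀ i : ℤ, IsSplitEpi (f.f i)

/-- A chain map is sirreducible if there is exactly one index `i₀` where the component is
irreducible in the category of finitely generated projective modules, the components in lower
degrees being split epimorphisms and those in higher degrees split monomorphisms.  (Since an
irreducible morphism is neither a split monomorphism nor a split epimorphism, the uniqueness
of such an index is automatic.) -/
def Sirreducible {X Y : Cplx Λ} (f : X ⟶ Y) : Prop :=
  ∃ i₀ : ℤ, IrreducibleP (f.f i₀) ∧ (∀ i : ℤ, i < i₀ → IsSplitEpi (f.f i)) ∧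
    (∀ i : ℤ, i₀ < i → IsSplitMono (f.f i))

/-- Irreducibility of a chain map in the category `C_I(P)` of minimal projective
complexes (a full subcategory of all complexes). -/
def IrreducibleC {X Y : Cplx Λ} (f : X ⟶ Y) : Prop :=
  ¬ IsSplitMono f ∧ ¬ IsSplitEpi f ∧
    ∀ (Z : Cplx Λ), IsMinimalProjective Z →
      ∀ (g : X ⟶ Z) (h : Z ⟶ Y), f = g ≫ h → IsSplitMono g ∨ IsSplitEpi h

/-- The quotient functor from minimal projective complexes to the homotopy category
`K_I(P)` (realized inside the homotopy category of all complexes, of which `K_I(P)` is a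
full subcategory, so that isomorphisms between minimal projective complexes in `K_I(P)`
are the same as in the ambient homotopy category). -/
noncomputable abbrev Q (Λ : Type) [Ring Λ] :
    Cplx Λ ⥤ HomotopyCategory (ModuleCat Λᵐᵒᵖ) (ComplexShape.up ℤ) :=
  HomotopyCategory.quotient (ModuleCat Λᵐᵒᵖ) (ComplexShape.up ℤ)

end ARShapes

/-!
Differentials of minimal complexes land in the radical, so two homotopic chain maps between
such complexes agree in each degree modulo the radical, and by Nakayama's lemma a chain map
homotopic to a componentwise surjective one is itself componentwise surjective. Applied to
representatives `v`, `w` of `ψ`, `ψ⁻¹` (with `w ≫ v` homotopic to the identity) this makes every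
`v.f i` surjective; hence `f ≫ v`, which is homotopic to `u ≫ g` for a representative `u` of `φ`,
is componentwise surjective, and so is `g`. A surjection onto a projective module splits.
-/

open CategoryTheory

theorem Submodule.eq_top_of_top_le_sup_jacobson_smul {R M : Type*} [Ring R] [AddCommGroup M]
    [Module R M] [Module.Finite R M] {N : Submodule R M}
    (h : ⊤ ≤ N ⊔ Ring.jacobson R • (⊤ : Submodule R M)) : N = ⊤ := by
  have hquot : (⊤ : Submodule R (M ⧸ N)) = ⊥ := by
    refine FG.eq_bot_of_le_jacobson_smul Module.Finite.fg_top ?_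
    calc (⊤ : Submodule R (M ⧸ N)) = map N.mkQ ⊤ := by rw [map_top, range_mkQ]
      _ ≤ map N.mkQ (N ⊔ Ring.jacobson R • ⊤) := map_mono h
      _ = Ring.jacobson R • ⊤ := by
        rw [map_sup, mkQ_map_self, bot_sup_eq, map_smul'', map_top, range_mkQ]
  rw [eq_top_iff]
  intro x _
  simpa using hquot.le (mem_top : N.mkQ x ∈ ⊤)

theorem LinearMap.range_comp_le_smul_top {R M N P : Type*} [Semiring R] [AddCommMonoid M]
    [AddCommMonoid N] [AddCommMonoid P] [Module R M] [Module R N] [Module R P] {I : Ideal R}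
    {f : M →ₗ[R] N} (g : N →ₗ[R] P) (hf : range f ≤ I • ⊤) : range (g ∘ₗ f) ≤ I • ⊤ := by
  rw [range_comp]
  exact (Submodule.map_mono hf).trans
    (Submodule.map_le_iff_le_comap.mpr (Submodule.smul_top_le_comap_smul_top I g))

namespace HomologicalComplex

variable {R : Type*} [Ring R] {ι : Type*} {c : ComplexShape ι}

def IsRadical (X : HomologicalComplex (ModuleCat R) c) : Prop :=
  ∀ i j, LinearMap.range (X.d i j).hom ≤ Ring.jacobson R • ⊤

end HomologicalComplex

namespace Homotopy

variable {R : Type*} [Ring R] {ι : Type*} {c : ComplexShape ι}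
  {Z W : HomologicalComplex (ModuleCat R) c} {a b : Z ⟶ W}

theorem range_f_le_sup_jacobson_smul (hZ : Z.IsRadical) (hW : W.IsRadical) (h : Homotopy a b)
    (i : ι) :
    LinearMap.range (a.f i).hom ≤ LinearMap.range (b.f i).hom ⊔ Ring.jacobson R • ⊤ := by
  have hdNext : LinearMap.range (dNext i h.hom).hom ≤ Ring.jacobson R • ⊤ :=
    LinearMap.range_comp_le_smul_top _ (hZ i (c.next i))
  have hprevD : LinearMap.range (prevD i h.hom).hom ≤ Ring.jacobson R • ⊤ :=
    (LinearMap.range_comp_le_range _ _).trans (hW (c.prev i) i)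
  rw [h.comm i, ModuleCat.hom_add, ModuleCat.hom_add]
  refine (LinearMap.range_add_le _ _).trans (sup_le ?_ le_sup_left)
  exact (LinearMap.range_add_le _ _).trans (sup_le hdNext hprevD) |>.trans le_sup_right

theorem surjective_f (hZ : Z.IsRadical) (hW : W.IsRadical) (h : Homotopy a b) (i : ι)
    [Module.Finite R (W.X i)] (ha : Function.Surjective (a.f i)) :
    Function.Surjective (b.f i) := by
  rw [← LinearMap.range_eq_top] at ha ⊢
  exact Submodule.eq_top_of_top_le_sup_jacobson_smul
    (ha ▸ h.range_f_le_sup_jacobson_smul hZ hW i)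

end Homotopy

theorem ModuleCat.isSplitEpi_of_surjective {R : Type*} [Ring R] {M N : ModuleCat R}
    [Module.Projective R N] {f : M ⟶ N} (hf : Function.Surjective f) : IsSplitEpi f :=
  have : Epi f := (ModuleCat.epi_iff_surjective f).mpr hf
  ⟨⟨⟨Projective.factorThru (𝟙 N) f, Projective.factorThru_comp _ _⟩⟩⟩

namespace ARShapes

theorem IsMinimalProjective.isRadical {Λ : Type} [Ring Λ] {X : Cplx Λ}
    (hX : IsMinimalProjective X) : X.IsRadical := by
  intro i j
  rw [← Ideal.jacobson_bot]
  by_cases hij : i + 1 = j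
  · subst hij
    exact hX.2.2 i
  · simp [X.shape i j hij]

theorem sepic_of_iso
    {Λ : Type} [Ring Λ]
    (X Y X' Y' : Cplx Λ)
    (hX : IsMinimalProjective X)
    (hY' : IsMinimalProjective Y')
    (f : X ⟶ Y) (g : X' ⟶ Y')
    (φ : (Q Λ).obj X ≅ (Q Λ).obj X') (ψ : (Q Λ).obj Y ≅ (Q Λ).obj Y')
    (hcomm : (Q Λ).map f ≫ ψ.hom = φ.hom ≫ (Q Λ).map g)
    (hf : Sepic f) :
    Sepic g := by
  let u : X ⟶ X' := φ.hom.out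
  let v : Y ⟶ Y' := ψ.hom.out
  let w : Y' ⟶ Y := ψ.inv.out
  have hQu : (Q Λ).map u = φ.hom := HomotopyCategory.quotient_map_out _
  have hQv : (Q Λ).map v = ψ.hom := HomotopyCategory.quotient_map_out _
  have hQw : (Q Λ).map w = ψ.inv := HomotopyCategory.quotient_map_out _
  have hwv : Homotopy (𝟙 Y') (w ≫ v) := HomotopyCategory.homotopyOfEq _ _ (by
    rw [(Q Λ).map_id, Functor.map_comp, hQw, hQv, ψ.inv_hom_id])
  have hfg : Homotopy (f ≫ v) (u ≫ g) := HomotopyCategory.homotopyOfEq _ _ (by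
    rw [Functor.map_comp, Functor.map_comp, hQu, hQv, hcomm])
  intro i
  have := hY'.1 i
  have := hY'.2.1 i
  have hv : Function.Surjective (v.f i) :=
    .of_comp (g := w.f i) (hwv.surjective_f hY'.isRadical hY'.isRadical i Function.surjective_id)
  have hfi : Function.Surjective (f.f i) := (ModuleCat.epi_iff_surjective _).mp (hf i).epi
  have hg : Function.Surjective (g.f i) :=
    .of_comp (g := u.f i) (hfg.surjective_f hX.isRadical hY'.isRadical i (hv.comp hfi))
  exact ModuleCat.isSplitEpi_of_surjective hg

end ARShapes
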